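/- Let lambda be a complex number with lambda * conj(lambda) = 1, let tau1 be a real number, and let C50, C41, C32, C23, C14, C05 be complex numbers. Define the pair of complex polynomials in two variables z, w: P(z,w) = lambda*(z + i*tau1*z^2*w + C50*z^5 + C41*z^4*w + C32*z^3*w^2 + C23*z^2*w^3 + C14*z*w^4 + C05*w^5) and Q(z,w) = conj(lambda)*(w - i*tau1*w^2*z + conj(C50)*w^5 + conj(C41)*w^4*z + conj(C32)*w^3*z^2 + conj(C23)*w^2*z^3 + conj(C14)*w*z^4 + conj(C05)*z^5). If the Jacobian determinant (dP/dz)*(dQ/dw) - (dP/dw)*(dQ/dz), as a polynomial in z and w, has zero coefficient on each of the monomials z^4, z^3*w, z^2*w^2, z*w^3 and w^4, then 5*C50 + conj(C14) = 0, 2*C41 + conj(C23) = 0, and tau1^2 + C32 + conj(C32) = 0. -/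
import Mathlib

set_option maxHeartbeats 2000000

open MvPolynomial

private lemma fe (f g : Fin 2 →₀ ℕ) : f = g ↔ f 0 = g 0 ∧ f 1 = g 1 := by
  constructor
  · rintro rfl; exact ⟨rfl, rfl⟩
  · rintro ⟨h0, h1⟩
    ext i
    fin_cases i
    · exact h0
    · exact h1

private lemma coeffTerm (a : ℂ) (i j m n : ℕ) :
    coeff (Finsupp.single 0 m + Finsupp.single 1 n)
      (C a * X 0 ^ i * X 1 ^ j : MvPolynomial (Fin 2) ℂ)
      = if i = m ∧ j = n then a else 0 := by
  have hcond : ((0 : Fin 2 →₀ ℕ) + Finsupp.single 0 i + Finsupp.single 1 j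
      = Finsupp.single 0 m + Finsupp.single 1 n) ↔ (i = m ∧ j = n) := by
    rw [fe]
    simp [Finsupp.single_apply]
  simp only [C_apply, X_pow_eq_monomial, monomial_mul, coeff_monomial, mul_one, hcond]

/-- the fifth-order coefficient constraints coming from area preservation
after third-order Birkhoff normalization: if the degree-4 part of the Jacobian
determinant of the quintic truncation vanishes, then `5C50 + conj C14 = 0`,
`2C41 + conj C23 = 0`, and `τ₁² + C32 + conj C32 = 0`. -/
theorem quintic_jacobian_constraints (lam : ℂ) (tau1 : ℝ)
    (C50 C41 C32 C23 C14 C05 : ℂ)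
    (hlam : lam * (starRingEnd ℂ) lam = 1)
    (P Q : MvPolynomial (Fin 2) ℂ)
    (hP : P = C lam * (X 0 + C (Complex.I * (tau1 : ℂ)) * X 0 ^ 2 * X 1
      + C C50 * X 0 ^ 5 + C C41 * X 0 ^ 4 * X 1 + C C32 * X 0 ^ 3 * X 1 ^ 2
      + C C23 * X 0 ^ 2 * X 1 ^ 3 + C C14 * X 0 * X 1 ^ 4 + C C05 * X 1 ^ 5))
    (hQ : Q = C ((starRingEnd ℂ) lam) * (X 1 - C (Complex.I * (tau1 : ℂ)) * X 1 ^ 2 * X 0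
      + C ((starRingEnd ℂ) C50) * X 1 ^ 5 + C ((starRingEnd ℂ) C41) * X 1 ^ 4 * X 0
      + C ((starRingEnd ℂ) C32) * X 1 ^ 3 * X 0 ^ 2
      + C ((starRingEnd ℂ) C23) * X 1 ^ 2 * X 0 ^ 3
      + C ((starRingEnd ℂ) C14) * X 1 * X 0 ^ 4 + C ((starRingEnd ℂ) C05) * X 0 ^ 5))
    (J : MvPolynomial (Fin 2) ℂ)
    (hJ : J = pderiv 0 P * pderiv 1 Q - pderiv 1 P * pderiv 0 Q)
    (h40 : coeff (Finsupp.single 0 4) J = 0)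
    (h31 : coeff (Finsupp.single 0 3 + Finsupp.single 1 1) J = 0)
    (h22 : coeff (Finsupp.single 0 2 + Finsupp.single 1 2) J = 0)
    (h13 : coeff (Finsupp.single 0 1 + Finsupp.single 1 3) J = 0)
    (h04 : coeff (Finsupp.single 1 4) J = 0) :
    5 * C50 + (starRingEnd ℂ) C14 = 0 ∧
    2 * C41 + (starRingEnd ℂ) C23 = 0 ∧
    (tau1 : ℂ) ^ 2 + C32 + (starRingEnd ℂ) C32 = 0 := by
  have hE : J =
    C ((1:ℂ) * (lam) * ((starRingEnd ℂ) lam)) * X 0 ^ 0 * X 1 ^ 0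
    + C ((5:ℂ) * (lam) * ((starRingEnd ℂ) lam) * (C50) + (1:ℂ) * (lam) * ((starRingEnd ℂ) lam) * ((starRingEnd ℂ) C14)) * X 0 ^ 4 * X 1 ^ 0
    + C ((4:ℂ) * (lam) * ((starRingEnd ℂ) lam) * (C41) + (2:ℂ) * (lam) * ((starRingEnd ℂ) lam) * ((starRingEnd ℂ) C23)) * X 0 ^ 3 * X 1 ^ 1
    + C ((-3:ℂ) * (lam) * ((starRingEnd ℂ) lam) * ((Complex.I * (tau1:ℂ))) * ((Complex.I * (tau1:ℂ))) + (3:ℂ) * (lam) * ((starRingEnd ℂ) lam) * (C32) + (3:ℂ) * (lam) * ((starRingEnd ℂ) lam) * ((starRingEnd ℂ) C32)) * X 0 ^ 2 * X 1 ^ 2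
    + C ((2:ℂ) * (lam) * ((starRingEnd ℂ) lam) * (C23) + (4:ℂ) * (lam) * ((starRingEnd ℂ) lam) * ((starRingEnd ℂ) C41)) * X 0 ^ 1 * X 1 ^ 3
    + C ((1:ℂ) * (lam) * ((starRingEnd ℂ) lam) * (C14) + (5:ℂ) * (lam) * ((starRingEnd ℂ) lam) * ((starRingEnd ℂ) C50)) * X 0 ^ 0 * X 1 ^ 4
    + C ((-5:ℂ) * (lam) * ((starRingEnd ℂ) lam) * ((Complex.I * (tau1:ℂ))) * ((starRingEnd ℂ) C05)) * X 0 ^ 6 * X 1 ^ 0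
    + C ((-10:ℂ) * (lam) * ((starRingEnd ℂ) lam) * ((Complex.I * (tau1:ℂ))) * (C50) + (-2:ℂ) * (lam) * ((starRingEnd ℂ) lam) * ((Complex.I * (tau1:ℂ))) * ((starRingEnd ℂ) C14)) * X 0 ^ 5 * X 1 ^ 1
    + C ((-7:ℂ) * (lam) * ((starRingEnd ℂ) lam) * ((Complex.I * (tau1:ℂ))) * (C41) + (1:ℂ) * (lam) * ((starRingEnd ℂ) lam) * ((Complex.I * (tau1:ℂ))) * ((starRingEnd ℂ) C23)) * X 0 ^ 4 * X 1 ^ 2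
    + C ((-4:ℂ) * (lam) * ((starRingEnd ℂ) lam) * ((Complex.I * (tau1:ℂ))) * (C32) + (4:ℂ) * (lam) * ((starRingEnd ℂ) lam) * ((Complex.I * (tau1:ℂ))) * ((starRingEnd ℂ) C32)) * X 0 ^ 3 * X 1 ^ 3
    + C ((-1:ℂ) * (lam) * ((starRingEnd ℂ) lam) * ((Complex.I * (tau1:ℂ))) * (C23) + (7:ℂ) * (lam) * ((starRingEnd ℂ) lam) * ((Complex.I * (tau1:ℂ))) * ((starRingEnd ℂ) C41)) * X 0 ^ 2 * X 1 ^ 4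
    + C ((2:ℂ) * (lam) * ((starRingEnd ℂ) lam) * ((Complex.I * (tau1:ℂ))) * (C14) + (10:ℂ) * (lam) * ((starRingEnd ℂ) lam) * ((Complex.I * (tau1:ℂ))) * ((starRingEnd ℂ) C50)) * X 0 ^ 1 * X 1 ^ 5
    + C ((5:ℂ) * (lam) * ((starRingEnd ℂ) lam) * ((Complex.I * (tau1:ℂ))) * (C05)) * X 0 ^ 0 * X 1 ^ 6
    + C ((-5:ℂ) * (lam) * ((starRingEnd ℂ) lam) * (C41) * ((starRingEnd ℂ) C05) + (5:ℂ) * (lam) * ((starRingEnd ℂ) lam) * (C50) * ((starRingEnd ℂ) C14)) * X 0 ^ 8 * X 1 ^ 0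
    + C ((-10:ℂ) * (lam) * ((starRingEnd ℂ) lam) * (C32) * ((starRingEnd ℂ) C05) + (10:ℂ) * (lam) * ((starRingEnd ℂ) lam) * (C50) * ((starRingEnd ℂ) C23)) * X 0 ^ 7 * X 1 ^ 1
    + C ((-15:ℂ) * (lam) * ((starRingEnd ℂ) lam) * (C23) * ((starRingEnd ℂ) C05) + (-5:ℂ) * (lam) * ((starRingEnd ℂ) lam) * (C32) * ((starRingEnd ℂ) C14) + (5:ℂ) * (lam) * ((starRingEnd ℂ) lam) * (C41) * ((starRingEnd ℂ) C23) + (15:ℂ) * (lam) * ((starRingEnd ℂ) lam) * (C50) * ((starRingEnd ℂ) C32)) * X 0 ^ 6 * X 1 ^ 2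
    + C ((-20:ℂ) * (lam) * ((starRingEnd ℂ) lam) * (C14) * ((starRingEnd ℂ) C05) + (-10:ℂ) * (lam) * ((starRingEnd ℂ) lam) * (C23) * ((starRingEnd ℂ) C14) + (10:ℂ) * (lam) * ((starRingEnd ℂ) lam) * (C41) * ((starRingEnd ℂ) C32) + (20:ℂ) * (lam) * ((starRingEnd ℂ) lam) * (C50) * ((starRingEnd ℂ) C41)) * X 0 ^ 5 * X 1 ^ 3
    + C ((-25:ℂ) * (lam) * ((starRingEnd ℂ) lam) * (C05) * ((starRingEnd ℂ) C05) + (-15:ℂ) * (lam) * ((starRingEnd ℂ) lam) * (C14) * ((starRingEnd ℂ) C14) + (-5:ℂ) * (lam) * ((starRingEnd ℂ) lam) * (C23) * ((starRingEnd ℂ) C23) + (5:ℂ) * (lam) * ((starRingEnd ℂ) lam) * (C32) * ((starRingEnd ℂ) C32) + (15:ℂ) * (lam) * ((starRingEnd ℂ) lam) * (C41) * ((starRingEnd ℂ) C41) + (25:ℂ) * (lam) * ((starRingEnd ℂ) lam) * (C50) * ((starRingEnd ℂ) C50)) * X 0 ^ 4 * X 1 ^ 4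
    + C ((-20:ℂ) * (lam) * ((starRingEnd ℂ) lam) * (C05) * ((starRingEnd ℂ) C14) + (-10:ℂ) * (lam) * ((starRingEnd ℂ) lam) * (C14) * ((starRingEnd ℂ) C23) + (10:ℂ) * (lam) * ((starRingEnd ℂ) lam) * (C32) * ((starRingEnd ℂ) C41) + (20:ℂ) * (lam) * ((starRingEnd ℂ) lam) * (C41) * ((starRingEnd ℂ) C50)) * X 0 ^ 3 * X 1 ^ 5
    + C ((-15:ℂ) * (lam) * ((starRingEnd ℂ) lam) * (C05) * ((starRingEnd ℂ) C23) + (-5:ℂ) * (lam) * ((starRingEnd ℂ) lam) * (C14) * ((starRingEnd ℂ) C32) + (5:ℂ) * (lam) * ((starRingEnd ℂ) lam) * (C23) * ((starRingEnd ℂ) C41) + (15:ℂ) * (lam) * ((starRingEnd ℂ) lam) * (C32) * ((starRingEnd ℂ) C50)) * X 0 ^ 2 * X 1 ^ 6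
    + C ((-10:ℂ) * (lam) * ((starRingEnd ℂ) lam) * (C05) * ((starRingEnd ℂ) C32) + (10:ℂ) * (lam) * ((starRingEnd ℂ) lam) * (C23) * ((starRingEnd ℂ) C50)) * X 0 ^ 1 * X 1 ^ 7
    + C ((-5:ℂ) * (lam) * ((starRingEnd ℂ) lam) * (C05) * ((starRingEnd ℂ) C41) + (5:ℂ) * (lam) * ((starRingEnd ℂ) lam) * (C14) * ((starRingEnd ℂ) C50)) * X 0 ^ 0 * X 1 ^ 8
      := by
    rw [hJ, hP, hQ]
    simp only [map_add, map_sub, pderiv_mul, pderiv_C, pderiv_pow, pderiv_X_self,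
      pderiv_X_of_ne (show (0 : Fin 2) ≠ 1 by decide),
      pderiv_X_of_ne (show (1 : Fin 2) ≠ 0 by decide)]
    simp only [map_mul, map_ofNat, map_neg, map_one]
    ring
  rw [show (Finsupp.single 0 4 : Fin 2 →₀ ℕ)
      = Finsupp.single 0 4 + Finsupp.single 1 0 by simp] at h40
  rw [show (Finsupp.single 1 4 : Fin 2 →₀ ℕ)
      = Finsupp.single 0 0 + Finsupp.single 1 4 by simp] at h04
  rw [hE] at h40 h31 h22 h13 h04
  simp only [coeff_add, coeffTerm] at h40 h31 h22 h13 h04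
  norm_num at h40 h31 h22 h13 h04
  refine ⟨?_, ?_, ?_⟩
  · linear_combination h40 - (5 * C50 + (starRingEnd ℂ) C14) * hlam
  · linear_combination (1/2 : ℂ) * h31 - (2 * C41 + (starRingEnd ℂ) C23) * hlam
  · linear_combination (1/3 : ℂ) * h22
      + (lam * (starRingEnd ℂ) lam * (tau1 : ℂ)^2) * Complex.I_sq
      - ((tau1 : ℂ)^2 + C32 + (starRingEnd ℂ) C32) * hlam
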